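/- Let G be a connected simple graph on n ≥ 3 vertices with Randić index R, algebraic connectivity a, and minimum degree δ. Then R·a ≥ nδ(2δ - n + 2)/(2(n-1)). -/

import Mathlib

open Finset Real Matrix

/-- The Randić index of a finite simple graph:
`R(G) = ∑_{uv ∈ E(G)} 1/√(d(u)·d(v))`. -/
noncomputable def randicIndex {V : Type*} [Fintype V] (G : SimpleGraph V) : ℝ :=
  letI : DecidableRel G.Adj := Classical.decRel _
  ∑ e ∈ G.edgeFinset,
    Sym2.lift ⟨fun u v => 1 / Real.sqrt ((G.degree u : ℝ) * (G.degree v : ℝ)),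
      fun u v => by simp [mul_comm]⟩ e

/-- The algebraic connectivity of a graph on `Fin n`: the second smallest eigenvalue
of the Laplacian matrix, characterized (via Courant–Fischer, since the all-ones vector
is an eigenvector of the smallest eigenvalue `0`) as the infimum of the Rayleigh
quotient over nonzero vectors orthogonal to the all-ones vector. -/
noncomputable def algebraicConnectivity {n : ℕ} (G : SimpleGraph (Fin n)) : ℝ :=
  letI : DecidableRel G.Adj := Classical.decRel _
  sInf {r : ℝ | ∃ x : Fin n → ℝ, x ≠ 0 ∧ (∑ i, x i) = 0 ∧
    r = (x ⬝ᵥ ((G.lapMatrix ℝ).mulVec x)) / (x ⬝ᵥ x)}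

/-- The edge connectivity of a graph: the least number of edges whose deletion
disconnects the graph. -/
noncomputable def edgeConnectivity {V : Type*} [Fintype V] (G : SimpleGraph V) : ℕ :=
  sInf {k : ℕ | ∃ s : Set (Sym2 V), s ⊆ G.edgeSet ∧ s.ncard = k ∧
    ¬ (G.deleteEdges s).Connected}

/-- The star `K_{1,n-1}` on vertex set `Fin n`: vertex `0` is adjacent to all others. -/
def starGraph (n : ℕ) : SimpleGraph (Fin n) where
  Adj i j := i ≠ j ∧ ((i : ℕ) = 0 ∨ (j : ℕ) = 0)
  symm := ⟨fun _ _ h => ⟨h.1.symm, h.2.symm⟩⟩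
  loopless := ⟨fun _ h => h.1 rfl⟩

/-!
Both factors are bounded separately. Every degree is at most `n - 1`, so each edge contributes
at least `1 / (n - 1)` to `R`, and the handshake lemma gives `R ≥ m / (n - 1) ≥ n δ / (2 (n - 1))`.
For `x ⊥ 𝟙`, the Laplacian forms of `G` and its complement add up to `n ‖x‖²`, while the form of
`Gᶜ` is at most `2 ∑ dᶜᵢ xᵢ² ≤ 2 (n - 1 - δ) ‖x‖²`; this is Fiedler's bound `a ≥ 2δ - n + 2`.
-/

theorem sum_sum_sub_sq {V : Type*} [Fintype V] (x : V → ℝ) :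
    ∑ i, ∑ j, (x i - x j) ^ 2 = 2 * Fintype.card V * ∑ i, x i ^ 2 - 2 * (∑ i, x i) ^ 2 := by
  simp only [sub_sq, sum_add_distrib, sum_sub_distrib, sum_const, card_univ, nsmul_eq_mul,
    ← mul_sum, ← sum_mul]
  ring

namespace SimpleGraph

variable {V : Type*} [Fintype V]

section Randic

variable (G : SimpleGraph V) [DecidableRel G.Adj]

theorem one_div_card_sub_one_le_one_div_sqrt_degree_mul {u v : V} (huv : G.Adj u v) :
    1 / (Fintype.card V - 1 : ℝ) ≤ 1 / √(G.degree u * G.degree v) := by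
  have hdeg_pos (w : V) (hw : ∃ w', G.Adj w w') : (0 : ℝ) < G.degree w := by
    exact_mod_cast G.degree_pos_iff_exists_adj w |>.2 hw
  have hdeg_le (w : V) : (G.degree w : ℝ) ≤ Fintype.card V - 1 := by
    have := G.degree_lt_card_verts w
    rw [le_sub_iff_add_le]
    exact_mod_cast this
  have hu := hdeg_pos u ⟨v, huv⟩
  have hv := hdeg_pos v ⟨u, huv.symm⟩
  refine one_div_le_one_div_of_le (by positivity)
    (Real.sqrt_le_iff.2 ⟨by linarith [hdeg_le u], ?_⟩)
  rw [sq]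
  exact mul_le_mul (hdeg_le u) (hdeg_le v) hv.le (by linarith [hdeg_le u])

theorem card_edgeFinset_div_le_randicIndex :
    #G.edgeFinset / (Fintype.card V - 1 : ℝ) ≤ randicIndex G := by
  obtain rfl : ‹DecidableRel G.Adj› = Classical.decRel _ := Subsingleton.elim _ _
  classical
  rw [div_eq_mul_one_div, ← nsmul_eq_mul]
  refine card_nsmul_le_sum _ _ _ fun e he => ?_
  induction e with
  | h u v => exact G.one_div_card_sub_one_le_one_div_sqrt_degree_mul (G.mem_edgeFinset.1 he)

theorem card_mul_minDegree_le_two_mul_card_edgeFinset :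
    Fintype.card V * G.minDegree ≤ 2 * #G.edgeFinset := by
  rw [← sum_degrees_eq_twice_card_edges, ← smul_eq_mul, ← card_univ]
  exact card_nsmul_le_sum _ _ _ fun v _ => G.minDegree_le_degree v

theorem card_mul_minDegree_div_le_randicIndex [Nonempty V] :
    Fintype.card V * G.minDegree / (2 * (Fintype.card V - 1 : ℝ)) ≤ randicIndex G := by
  have hcard : (1 : ℝ) ≤ Fintype.card V := by exact_mod_cast Fintype.card_pos
  have hedges : (Fintype.card V * G.minDegree : ℝ) ≤ 2 * #G.edgeFinset := by
    exact_mod_cast G.card_mul_minDegree_le_two_mul_card_edgeFinset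
  calc Fintype.card V * G.minDegree / (2 * (Fintype.card V - 1 : ℝ))
      ≤ 2 * #G.edgeFinset / (2 * (Fintype.card V - 1 : ℝ)) := by gcongr
    _ = #G.edgeFinset / (Fintype.card V - 1 : ℝ) := mul_div_mul_left _ _ two_ne_zero
    _ ≤ randicIndex G := G.card_edgeFinset_div_le_randicIndex

end Randic

theorem sum_sum_adj_add_eq_two_mul_sum_degree_mul (G : SimpleGraph V) [DecidableRel G.Adj]
    (f : V → ℝ) :
    ∑ i, ∑ j, (if G.Adj i j then f i + f j else 0) = 2 * ∑ i, G.degree i * f i := by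
  have hsymm : ∑ i, ∑ j, (if G.Adj i j then f j else 0) =
      ∑ i, ∑ j, (if G.Adj i j then f i else 0) := by
    rw [sum_comm]
    exact sum_congr rfl fun i _ => sum_congr rfl fun j _ => if_congr (G.adj_comm _ _) rfl rfl
  simp only [ite_add_zero, sum_add_distrib, hsymm, G.degree_eq_sum_if_adj (R := ℝ), sum_mul,
    ite_mul, one_mul, zero_mul]
  ring

variable [DecidableEq V]

theorem dotProduct_lapMatrix_mulVec_add_compl (G : SimpleGraph V) [DecidableRel G.Adj]
    (x : V → ℝ) :
    x ⬝ᵥ G.lapMatrix ℝ *ᵥ x + x ⬝ᵥ Gᶜ.lapMatrix ℝ *ᵥ x =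
      Fintype.card V * ∑ i, x i ^ 2 - (∑ i, x i) ^ 2 := by
  simp only [← toLinearMap₂'_apply', lapMatrix_toLinearMap₂']
  have hsplit (i j : V) : ((if G.Adj i j then (x i - x j) ^ 2 else 0) +
      if Gᶜ.Adj i j then (x i - x j) ^ 2 else 0) = (x i - x j) ^ 2 := by
    by_cases hij : i = j
    · simp [hij]
    · by_cases h : G.Adj i j <;> simp [h, hij]
  rw [← add_div, ← sum_add_distrib]
  simp only [← sum_add_distrib, hsplit, sum_sum_sub_sq]
  ring

theorem dotProduct_lapMatrix_mulVec_le (G : SimpleGraph V) [DecidableRel G.Adj] (x : V → ℝ) :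
    x ⬝ᵥ G.lapMatrix ℝ *ᵥ x ≤ ∑ i, G.degree i * (2 * x i ^ 2) := by
  rw [← toLinearMap₂'_apply', lapMatrix_toLinearMap₂', div_le_iff₀ two_pos, mul_comm,
    ← sum_sum_adj_add_eq_two_mul_sum_degree_mul]
  gcongr with i _ j _
  split_ifs
  · nlinarith [sq_nonneg (x i + x j)]
  · rfl

theorem two_mul_minDegree_sub_mul_le_dotProduct_lapMatrix_mulVec (G : SimpleGraph V)
    [DecidableRel G.Adj] {x : V → ℝ} (hx : ∑ i, x i = 0) :
    (2 * G.minDegree - Fintype.card V + 2) * ∑ i, x i ^ 2 ≤ x ⬝ᵥ G.lapMatrix ℝ *ᵥ x := by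
  have hdeg_compl (i : V) : (Gᶜ.degree i : ℝ) ≤ Fintype.card V - 1 - G.minDegree := by
    have hlt := G.degree_lt_card_verts i
    have hmin : (G.minDegree : ℝ) ≤ G.degree i := by exact_mod_cast G.minDegree_le_degree i
    rw [degree_compl, Nat.cast_sub (by omega), Nat.cast_sub (by omega)]
    push_cast
    linarith
  have hcompl : x ⬝ᵥ Gᶜ.lapMatrix ℝ *ᵥ x ≤
      (Fintype.card V - 1 - G.minDegree) * (2 * ∑ i, x i ^ 2) := by
    refine (Gᶜ.dotProduct_lapMatrix_mulVec_le x).trans ?_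
    rw [mul_sum, mul_sum]
    gcongr with i
    exact hdeg_compl i
  have hsum := G.dotProduct_lapMatrix_mulVec_add_compl x
  rw [hx] at hsum
  linarith

end SimpleGraph

theorem algebraicConnectivity_nonneg {n : ℕ} (G : SimpleGraph (Fin n)) :
    0 ≤ algebraicConnectivity G := by
  classical
  refine Real.sInf_nonneg ?_
  rintro _ ⟨x, -, -, rfl⟩
  have hL := (G.posSemidef_lapMatrix ℝ).dotProduct_mulVec_nonneg x
  rw [star_trivial] at hL
  exact div_nonneg hL (dotProduct_self_star_nonneg x)

theorem le_algebraicConnectivity {n : ℕ} (hn : 2 ≤ n) (G : SimpleGraph (Fin n))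
    [DecidableRel G.Adj] {c : ℝ}
    (h : ∀ x : Fin n → ℝ, ∑ i, x i = 0 → c * (x ⬝ᵥ x) ≤ x ⬝ᵥ G.lapMatrix ℝ *ᵥ x) :
    c ≤ algebraicConnectivity G := by
  obtain rfl : ‹DecidableRel G.Adj› = Classical.decRel _ := Subsingleton.elim _ _
  have : NeZero n := ⟨by omega⟩
  refine le_csInf ?_ ?_
  · let x : Fin n → ℝ := Pi.single 0 1 - Pi.single 1 1
    have h01 : (0 : Fin n) ≠ 1 := by
      simp [Fin.ext_iff, Nat.mod_eq_of_lt (by omega : 1 < n)]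
    refine ⟨_, x, fun hx => ?_, ?_, rfl⟩
    · simpa [x, h01] using congrFun hx 0
    · simp [x, sum_sub_distrib]
  · rintro _ ⟨x, hx0, hxs, rfl⟩
    have hpos := dotProduct_self_star_pos_iff.2 hx0
    rw [star_trivial] at hpos
    exact (le_div_iff₀ hpos).2 (h x hxs)

theorem two_mul_minDegree_sub_le_algebraicConnectivity {n : ℕ} (hn : 2 ≤ n)
    (G : SimpleGraph (Fin n)) [DecidableRel G.Adj] :
    2 * G.minDegree - n + 2 ≤ algebraicConnectivity G := by
  refine le_algebraicConnectivity hn G fun x hx => ?_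
  have := G.two_mul_minDegree_sub_mul_le_dotProduct_lapMatrix_mulVec hx
  simpa [dotProduct, sq] using this

theorem randic_mul_algConn_ge_of_minDegree_general
    {n : ℕ} (hn : 3 ≤ n) (G : SimpleGraph (Fin n)) [DecidableRel G.Adj] :
    randicIndex G * algebraicConnectivity G ≥
      (n : ℝ) * (G.minDegree : ℝ) * (2 * (G.minDegree : ℝ) - (n : ℝ) + 2) /
        (2 * ((n : ℝ) - 1)) := by
  have : NeZero n := ⟨by omega⟩
  have hR : (n : ℝ) * G.minDegree / (2 * ((n : ℝ) - 1)) ≤ randicIndex G := by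
    simpa using G.card_mul_minDegree_div_le_randicIndex
  have hR_nonneg : 0 ≤ (n : ℝ) * G.minDegree / (2 * ((n : ℝ) - 1)) := by
    have : (3 : ℝ) ≤ n := by exact_mod_cast hn
    exact div_nonneg (by positivity) (by linarith)
  have ha := two_mul_minDegree_sub_le_algebraicConnectivity (by omega) G
  rw [ge_iff_le, mul_div_right_comm]
  rcases le_total 0 (2 * (G.minDegree : ℝ) - n + 2) with hc | hc
  · exact mul_le_mul hR ha hc (hR_nonneg.trans hR)
  · exact (mul_nonpos_of_nonneg_of_nonpos hR_nonneg hc).trans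
      (mul_nonneg (hR_nonneg.trans hR) (algebraicConnectivity_nonneg G))

theorem randic_mul_algConn_ge_of_minDegree
    {n : ℕ} (hn : 3 ≤ n) (G : SimpleGraph (Fin n)) [DecidableRel G.Adj] (hG : G.Connected) :
    randicIndex G * algebraicConnectivity G ≥
      (n : ℝ) * (G.minDegree : ℝ) * (2 * (G.minDegree : ℝ) - (n : ℝ) + 2) /
        (2 * ((n : ℝ) - 1)) :=
  randic_mul_algConn_ge_of_minDegree_general hn G
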